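/- arXiv:2602.00435 — 5 statements merged into one kernel-verified Lean document; each statement's English description precedes it below -/
import Mathlib

section
/- For any s ≥ 2, the set W(s) of s-well approximable numbers is contained in the set of reals in [0,1] with effective (Kolmogorov/constructive) dimension at most 2/s. -/
open Filter Set

noncomputable section

/-- A gauge function: continuous, non-decreasing, positive on ℝ⁺, tending to 0 at 0⁺. -/
def IsGauge (f : ℝ → ℝ) : Prop :=
  ContinuousOn f (Set.Ioi 0) ∧ (∀ x : ℝ, 0 < x → 0 < f x) ∧
  MonotoneOn f (Set.Ioi 0) ∧
  Filter.Tendsto f (nhdsWithin 0 (Set.Ioi 0)) (nhds 0)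

/-- `f ≤* g` : `f ≤ g` on some interval `(0, δ)`. -/
def LeStar (f g : ℝ → ℝ) : Prop := ∃ δ : ℝ, 0 < δ ∧ ∀ x : ℝ, 0 < x → x < δ → f x ≤ g x

/-- `x ↦ f(x)/x` is monotonically decreasing on `(0, ∞)`. -/
def RatioDecreasing (f : ℝ → ℝ) : Prop := AntitoneOn (fun x => f x / x) (Set.Ioi 0)

/-- Codes for partial computable functions relative to an oracle. -/
inductive OCode : Type
  | zero | succ | left | right | oracle
  | pair (a b : OCode) | comp (a b : OCode) | prec (a b : OCode) | rfind' (a : OCode)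

def OCode.eval (g : ℕ →. ℕ) : OCode → ℕ →. ℕ
  | .zero => fun _ => Part.some 0
  | .succ => fun n => Part.some (n + 1)
  | .left => fun n => Part.some n.unpair.1
  | .right => fun n => Part.some n.unpair.2
  | .oracle => g
  | .pair cf cg => fun n => Nat.pair <$> OCode.eval g cf n <*> OCode.eval g cg n
  | .comp cf cg => fun n => OCode.eval g cg n >>= OCode.eval g cf
  | .prec cf cg => Nat.unpaired fun a n =>
      n.rec (OCode.eval g cf a) fun y IH => do
        let i ← IH
        OCode.eval g cg (Nat.pair a (Nat.pair y i))
  | .rfind' cf => Nat.unpaired fun a m =>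
      (Nat.rfind fun n => (fun x => x = 0) <$> OCode.eval g cf (Nat.pair a (n + m))).map (· + m)

def OCode.encode : OCode → ℕ
  | .zero => 0
  | .succ => 1
  | .left => 2
  | .right => 3
  | .oracle => 4
  | .pair a b => 5 + 4 * Nat.pair a.encode b.encode + 0
  | .comp a b => 5 + 4 * Nat.pair a.encode b.encode + 1
  | .prec a b => 5 + 4 * Nat.pair a.encode b.encode + 2
  | .rfind' a => 5 + 4 * a.encode + 3

/-- Evaluation of a code on binary strings, relative to oracle `g`. -/
def strEval (g : ℕ →. ℕ) (c : OCode) (τ : List Bool) : Part (List Bool) :=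
  (c.eval g (Encodable.encode τ)).bind fun n =>
    Part.ofOption (Encodable.decode (α := List Bool) n)

/-- The machine coded by `c` (relative to `g`) is prefix-free. -/
def PrefixFreeCode (g : ℕ →. ℕ) (c : OCode) : Prop :=
  ∀ τ₁ τ₂ : List Bool, (strEval g c τ₁).Dom → (strEval g c τ₂).Dom → τ₁ <+: τ₂ → τ₁ = τ₂

/-- Prefix-free Kolmogorov complexity relative to oracle `g` (via a universal machine
that runs code `c` on input `τ` at cost `encode c + 1 + |τ|`). -/
def Krel (g : ℕ →. ℕ) (σ : List Bool) : ℕ :=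
  sInf { n : ℕ | ∃ c : OCode, PrefixFreeCode g c ∧
    ∃ τ : List Bool, σ ∈ strEval g c τ ∧ n = OCode.encode c + 1 + τ.length }

def emptyOracle : ℕ →. ℕ := fun _ => Part.some 0

/-- Prefix-free Kolmogorov complexity. -/
def K (σ : List Bool) : ℕ := Krel emptyOracle σ

/-- The first `n` bits of `x ∈ 2^ω`. -/
def seg (x : ℕ → Bool) (n : ℕ) : List Bool := List.ofFn (fun i : Fin n => x i)

/-- Effective dimension relative to oracle `g`. -/
def dimRel (g : ℕ →. ℕ) (x : ℕ → Bool) : ℝ :=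
  Filter.liminf (fun n : ℕ => (Krel g (seg x n) : ℝ) / n) Filter.atTop

/-- Effective dimension. -/
def dim (x : ℕ → Bool) : ℝ := dimRel emptyOracle x

/-- The `i`-th binary digit of a real `x ∈ [0,1]`. -/
def digit (x : ℝ) (i : ℕ) : Bool := decide (⌊x * 2 ^ (i + 1)⌋ % 2 = 1)

/-- Effective dimension of a real, via its binary digits. -/
def realDim (x : ℝ) : ℝ := dim (fun i => digit x i)

def Ddim (s : ℝ) : Set (ℕ → Bool) := {x | dim x = s}
def Dle (s : ℝ) : Set (ℕ → Bool) := {x | dim x ≤ s}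
def Dlt (s : ℝ) : Set (ℕ → Bool) := {x | dim x < s}

/-- The cylinder of a string (`∅` for `none`). -/
def cylOpt : Option (List Bool) → Set (ℕ → Bool)
  | none => ∅
  | some σ => {x | ∀ i : ℕ, (h : i < σ.length) → x i = σ.get ⟨i, h⟩}

def gaugeCost (f : ℝ → ℝ) : Option (List Bool) → ENNReal
  | none => 0
  | some σ => ENNReal.ofReal (f ((2 : ℝ) ^ (-(σ.length : ℝ))))

/-- The `f`-Hausdorff measure on Cantor space, via covers by cylinders. -/
def Hf (f : ℝ → ℝ) (A : Set (ℕ → Bool)) : ENNReal :=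
  ⨆ n : ℕ, ⨅ (C : ℕ → Option (List Bool)) (_ : A ⊆ ⋃ i, cylOpt (C i))
    (_ : ∀ i σ, C i = some σ → n ≤ σ.length), ∑' i, gaugeCost f (C i)

/-- The uniform (coin-flipping) outer measure on Cantor space. -/
def muC : Set (ℕ → Bool) → ENNReal := Hf (fun x => x)

/-- Dyadic interval `[j·2^{-n}, (j+1)·2^{-n})` (`∅` for `none`). -/
def dyOpt : Option (ℕ × ℤ) → Set ℝ
  | none => ∅
  | some p => Set.Ico ((p.2 : ℝ) * 2 ^ (-(p.1 : ℤ))) (((p.2 : ℝ) + 1) * 2 ^ (-(p.1 : ℤ)))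

def dyCost (f : ℝ → ℝ) : Option (ℕ × ℤ) → ENNReal
  | none => 0
  | some p => ENNReal.ofReal (f ((2 : ℝ) ^ (-(p.1 : ℤ))))

/-- The `f`-Hausdorff measure on `ℝ`, via covers by dyadic intervals. -/
def HfReal (f : ℝ → ℝ) (B : Set ℝ) : ENNReal :=
  ⨆ m : ℕ, ⨅ (C : ℕ → Option (ℕ × ℤ)) (_ : B ⊆ ⋃ i, dyOpt (C i))
    (_ : ∀ i p, C i = some p → m ≤ p.1), ∑' i, dyCost f (C i)

/-- The canonical map from Cantor space to `[0,1]`. -/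
def piMap (x : ℕ → Bool) : ℝ := ∑' i : ℕ, if x i then ((2 : ℝ) ^ (i + 1))⁻¹ else 0

/-- The set of `s`-well approximable numbers. -/
def W (s : ℝ) : Set ℝ :=
  {x | x ∈ Set.Icc (0 : ℝ) 1 ∧
    {pq : ℤ × ℤ | 0 < pq.2 ∧ |x - (pq.1 : ℝ) / (pq.2 : ℝ)| < (pq.2 : ℝ) ^ (-s)}.Infinite}

/-- `r_{n-1}^*`, with the convention `r_{-1}^* = 1`. -/
def prevR (rstar : ℕ → ℝ) : ℕ → ℝ
  | 0 => 1
  | n + 1 => rstar n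

/-- Level `k` is forced to `0` in the tree `T`. -/
def Forced (rstar : ℕ → ℝ) (l : ℕ → ℕ) (k : ℕ) : Prop :=
  ∃ n : ℕ, rstar n * (l (n + 1) : ℝ) + (1 - prevR rstar n) * (l n : ℝ) ≤ (k : ℝ) ∧ k < l (n + 1)

/-- The set `[T]` of infinite paths through the tree `T`. -/
def TreePaths (rstar : ℕ → ℝ) (l : ℕ → ℕ) : Set (ℕ → Bool) :=
  {x | ∀ k : ℕ, Forced rstar l k → x k = false}

open Classical in
/-- The number of splitting (non-forced) levels of `T` below `k`. -/
def freeCount (rstar : ℕ → ℝ) (l : ℕ → ℕ) (k : ℕ) : ℕ :=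
  ((Finset.range k).filter fun j => ¬ Forced rstar l j).card

open Classical in
/-- The canonical homeomorphism `δ : 2^ω → [T]`, sending the `k`-th bit of `x`
to the `k`-th splitting level of `T`. -/
def deltaMap (rstar : ℕ → ℝ) (l : ℕ → ℕ) (x : ℕ → Bool) : ℕ → Bool :=
  fun k => if Forced rstar l k then false else x (freeCount rstar l k)

/-- The tree `T` as a set of finite strings. -/
def TreeStrings (rstar : ℕ → ℝ) (l : ℕ → ℕ) : Set (List Bool) :=
  {σ | ∀ k : ℕ, (h : k < σ.length) → Forced rstar l k → σ.get ⟨k, h⟩ = false}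

open Classical in
/-- The tree `T` as an oracle. -/
def oracleOfTree (rstar : ℕ → ℝ) (l : ℕ → ℕ) : ℕ →. ℕ :=
  fun m => Part.some
    (if (Encodable.decode (α := List Bool) m).elim False (· ∈ TreeStrings rstar l) then 1 else 0)

end

/-!
If `|x - p/q| < q^(-s)` and `2^k ≤ q < 2^(k+1)`, then for `n = ⌊s k⌋` the number `p/q`
is within `2^(-n)` of `x`, so `⌊2^n x⌋` differs from `⌊2^n p/q⌋` by at most one. Hence the
first `n` binary digits of `x` are computable from `p`, `q` (about `2k` bits), `n` and a
correction in `{0, 1, 2}` (`O(log n)` bits). A prefix-free two-part code for these data gives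
`K(x↾n) ≤ 2k + O(log n) ≤ (2/s) n + O(log n)`, and since `x` has approximations with
arbitrarily large `q`, this holds for infinitely many `n`.
-/

open Topology

namespace OCode

def ofCode : Nat.Partrec.Code → OCode
  | .zero => .zero
  | .succ => .succ
  | .left => .left
  | .right => .right
  | .pair a b => .pair (ofCode a) (ofCode b)
  | .comp a b => .comp (ofCode a) (ofCode b)
  | .prec a b => .prec (ofCode a) (ofCode b)
  | .rfind' a => .rfind' (ofCode a)

theorem eval_ofCode (g : ℕ →. ℕ) (c : Nat.Partrec.Code) : (ofCode c).eval g = c.eval := by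
  induction c <;> simp [ofCode, OCode.eval, Nat.Partrec.Code.eval, *] <;> rfl

theorem exists_strEval_eq {M : List Bool →. List Bool} (hM : Partrec M) :
    ∃ c : OCode, ∀ g τ, strEval g c τ = M τ := by
  obtain ⟨c, hc⟩ := Nat.Partrec.Code.exists_code.1 hM
  refine ⟨ofCode c, fun g τ => ?_⟩
  rw [strEval, eval_ofCode, hc]
  simp [Part.bind_map]

end OCode

theorem Krel_le_of_partrec (g : ℕ →. ℕ) {M : List Bool →. List Bool} (hM : Partrec M)
    (hpf : ∀ τ₁ τ₂, (M τ₁).Dom → (M τ₂).Dom → τ₁ <+: τ₂ → τ₁ = τ₂) :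
    ∃ C, ∀ τ σ, σ ∈ M τ → Krel g σ ≤ C + τ.length := by
  obtain ⟨c, hc⟩ := OCode.exists_strEval_eq hM
  refine ⟨c.encode + 1, fun τ σ hσ => Nat.sInf_le ⟨c, ?_, τ, ?_, rfl⟩⟩
  · simpa only [PrefixFreeCode, hc] using hpf
  · rwa [hc]

def ofBits (l : List Bool) : ℕ := l.foldr Nat.bit 0

theorem ofBits_bits (n : ℕ) : ofBits n.bits = n := by
  induction n using Nat.binaryRec' with
  | zero => rfl
  | bit b n h ih => rw [Nat.bits_append_bit n b h, ofBits, List.foldr_cons, ← ofBits, ih]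

theorem primrec_ofBits : Primrec ofBits := by
  have hbit : Primrec₂ Nat.bit :=
    (Primrec.cond Primrec.fst
      (Primrec.succ.comp (Primrec.nat_mul.comp (Primrec.const 2) Primrec.snd))
      (Primrec.nat_mul.comp (Primrec.const 2) Primrec.snd)).of_eq fun p => by
        cases p.1 <;> rfl
  exact (Primrec.list_foldr Primrec.id (Primrec.const 0)
    (hbit.comp (Primrec.fst.comp Primrec.snd) (Primrec.snd.comp Primrec.snd)).to₂).of_eq
    fun _ => rfl

/-- A self-delimiting header `⟪u, |m|⟫` (its length in unary, then its bits), followed by the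
bits of `m`. -/
def twoPartCode (u m : ℕ) : List Bool :=
  List.replicate (Nat.pair u m.size).size true ++ false :: ((Nat.pair u m.size).bits ++ m.bits)

def twoPartDecode (f : ℕ → ℕ → List Bool) (τ : List Bool) : Option (List Bool) :=
  let a := τ.idxOf false
  let v := ofBits ((τ.drop (a + 1)).take a)
  if τ.length = 2 * a + 1 + v.unpair.2 then
    some (f v.unpair.1 (ofBits (τ.drop (2 * a + 1))))
  else none

theorem length_twoPartCode (u m : ℕ) :
    (twoPartCode u m).length = 2 * (Nat.pair u m.size).size + 1 + m.size := by
  simp only [twoPartCode, List.length_append, List.length_replicate, List.length_cons,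
    Nat.size_eq_bits_len]
  ring

theorem twoPartDecode_twoPartCode (f : ℕ → ℕ → List Bool) (u m : ℕ) :
    twoPartDecode f (twoPartCode u m) = some (f u m) := by
  set v := Nat.pair u m.size
  have hidx : (twoPartCode u m).idxOf false = v.size := by
    simp [twoPartCode, v, List.idxOf_append_of_notMem]
  have hheader : ((twoPartCode u m).drop (v.size + 1)).take v.size = v.bits := by
    rw [twoPartCode, ← List.singleton_append, ← List.append_assoc,
      List.drop_left' (by simp [v]), List.take_left' (Nat.size_eq_bits_len v)]
  have hpayload : (twoPartCode u m).drop (2 * v.size + 1) = m.bits := by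
    rw [twoPartCode, ← List.cons_append, ← List.append_assoc, List.drop_left']
    simp [Nat.size_eq_bits_len, v]
    ring
  simp only [twoPartDecode, hidx, hheader, hpayload, ofBits_bits, v, Nat.unpair_pair,
    length_twoPartCode, if_true]

theorem computable_twoPartDecode {f : ℕ → ℕ → List Bool} (hf : Computable₂ f) :
    Computable (twoPartDecode f) := by
  have ha : Primrec fun τ : List Bool => τ.idxOf false :=
    Primrec.list_idxOf.comp (Primrec.const false) Primrec.id
  have hv : Primrec fun τ : List Bool =>
      ofBits ((τ.drop (τ.idxOf false + 1)).take (τ.idxOf false)) :=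
    primrec_ofBits.comp (Primrec.list_take.comp ha
      (Primrec.list_drop.comp (Primrec.succ.comp ha) Primrec.id))
  have hw : Primrec fun τ : List Bool => ofBits (τ.drop (2 * τ.idxOf false + 1)) :=
    primrec_ofBits.comp (Primrec.list_drop.comp
      (Primrec.succ.comp (Primrec.nat_mul.comp (Primrec.const 2) ha)) Primrec.id)
  have hc : Primrec fun τ : List Bool =>
      decide (τ.length = 2 * τ.idxOf false + 1 + (ofBits ((τ.drop (τ.idxOf false + 1)).take
        (τ.idxOf false))).unpair.2) :=
    (Primrec.eq.comp Primrec.list_length (Primrec.nat_add.comp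
      (Primrec.succ.comp (Primrec.nat_mul.comp (Primrec.const 2) ha))
      (Primrec.snd.comp (Primrec.unpair.comp hv)))).decide
  refine (Computable.cond hc.to_comp
    (Computable.option_some.comp (hf.comp
      (Computable.fst.comp (Computable.unpair.comp hv.to_comp)) hw.to_comp))
    (Computable.const none)).of_eq fun τ => ?_
  simp only [twoPartDecode]
  split <;> simp_all

theorem eq_of_isPrefix_twoPartDecode {f : ℕ → ℕ → List Bool} {τ₁ τ₂ : List Bool}
    (h₁ : (twoPartDecode f τ₁).isSome) (h₂ : (twoPartDecode f τ₂).isSome)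
    (h : τ₁ <+: τ₂) : τ₁ = τ₂ := by
  simp only [twoPartDecode, Option.isSome_ite] at h₁ h₂
  obtain ⟨ext, rfl⟩ := h
  set a := τ₁.idxOf false
  have hmem : false ∈ τ₁ := List.idxOf_lt_length_iff.1 (by omega)
  have hidx : (τ₁ ++ ext).idxOf false = a := List.idxOf_append_of_mem hmem
  have hheader : ((τ₁ ++ ext).drop (a + 1)).take a = (τ₁.drop (a + 1)).take a := by
    rw [List.drop_append_of_le_length (by omega), List.take_append_of_le_length (by simp; omega)]
  rw [hidx, hheader] at h₂
  exact (List.prefix_append τ₁ ext).eq_of_length (by omega)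

theorem exists_Krel_le_two_part_code (g : ℕ →. ℕ) {f : ℕ → ℕ → List Bool}
    (hf : Computable₂ f) :
    ∃ C, ∀ u m, Krel g (f u m) ≤ C + 2 * (Nat.pair u m.size).size + m.size := by
  obtain ⟨C, hC⟩ := Krel_le_of_partrec g (computable_twoPartDecode hf).ofOption
    fun _ _ h₁ h₂ => eq_of_isPrefix_twoPartDecode ((Part.ofOption_dom _).1 h₁)
      ((Part.ofOption_dom _).1 h₂)
  refine ⟨C + 1, fun u m => ?_⟩
  have := hC (twoPartCode u m) (f u m) (by simp [twoPartDecode_twoPartCode])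
  rw [length_twoPartCode] at this
  omega

def lowBits (N n : ℕ) : List Bool :=
  (List.range n).map fun i => decide (N / 2 ^ (n - 1 - i) % 2 = 1)

theorem primrec_lowBits : Primrec₂ lowBits := by
  have hpow : Primrec₂ (fun a b : ℕ => a ^ b) := Primrec₂.unpaired'.1 Nat.Primrec.pow
  have hbit : Primrec₂ fun (Nn : ℕ × ℕ) (i : ℕ) =>
      decide (Nn.1 / 2 ^ (Nn.2 - 1 - i) % 2 = 1) :=
    (Primrec.eq.comp (Primrec.nat_mod.comp (Primrec.nat_div.comp (Primrec.fst.comp Primrec.fst)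
      (hpow.comp (Primrec.const 2) (Primrec.nat_sub.comp (Primrec.nat_sub.comp
        (Primrec.snd.comp Primrec.fst) (Primrec.const 1)) Primrec.snd))) (Primrec.const 2))
      (Primrec.const 1)).decide
  exact (Primrec.list_map (Primrec.list_range.comp Primrec.snd) hbit).to₂

theorem seg_digit_eq_lowBits {x : ℝ} (hx : 0 ≤ x) (n : ℕ) :
    seg (fun i => digit x i) n = lowBits ⌊x * 2 ^ n⌋₊ n := by
  refine List.ext_getElem (by simp [seg, lowBits]) fun i hi _ => ?_
  have hin : i < n := by simpa [seg] using hi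
  have hfloor : ⌊x * 2 ^ n⌋₊ / 2 ^ (n - 1 - i) = ⌊x * 2 ^ (i + 1)⌋₊ := by
    rw [← Nat.floor_div_natCast]
    congr 1
    rw [Nat.cast_pow, Nat.cast_ofNat, div_eq_iff (by positivity), mul_assoc, ← pow_add]
    congr 2
    omega
  have hcast : ((⌊x * 2 ^ (i + 1)⌋₊ : ℕ) : ℤ) = ⌊x * 2 ^ (i + 1)⌋ :=
    Int.natCast_floor_eq_floor (by positivity)
  simp only [seg, lowBits, List.getElem_ofFn, List.getElem_map, List.getElem_range, digit,
    hfloor, ← hcast]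
  exact decide_eq_decide.2 (by omega)

/-- For `u = ⟪n, j⟫` and `m = ⟪p, q⟫`: the `n` lowest binary digits of
`⌊2^n p/q⌋ + j - 1`. -/
def approxDigits (u m : ℕ) : List Bool :=
  lowBits (m.unpair.1 * 2 ^ u.unpair.1 / m.unpair.2 + u.unpair.2 - 1) u.unpair.1

theorem primrec_approxDigits : Primrec₂ approxDigits := by
  have hpow : Primrec₂ (fun a b : ℕ => a ^ b) := Primrec₂.unpaired'.1 Nat.Primrec.pow
  have hn : Primrec fun um : ℕ × ℕ => um.1.unpair.1 :=
    Primrec.fst.comp (Primrec.unpair.comp .fst)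
  have hj : Primrec fun um : ℕ × ℕ => um.1.unpair.2 :=
    Primrec.snd.comp (Primrec.unpair.comp .fst)
  have hp : Primrec fun um : ℕ × ℕ => um.2.unpair.1 :=
    Primrec.fst.comp (Primrec.unpair.comp .snd)
  have hq : Primrec fun um : ℕ × ℕ => um.2.unpair.2 :=
    Primrec.snd.comp (Primrec.unpair.comp .snd)
  exact primrec_lowBits.comp (Primrec.nat_sub.comp (Primrec.nat_add.comp (Primrec.nat_div.comp
    (Primrec.nat_mul.comp hp (hpow.comp (Primrec.const 2) hn)) hq) hj) (Primrec.const 1)) hn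

theorem Nat.size_pair_le {a b S : ℕ} (ha : a.size ≤ S) (hb : b.size ≤ S) :
    (Nat.pair a b).size ≤ 2 * S := by
  rw [Nat.size_le] at *
  calc Nat.pair a b < (max a b + 1) ^ 2 := Nat.pair_lt_max_add_one_sq a b
    _ ≤ (2 ^ S) ^ 2 := Nat.pow_le_pow_left (max_lt ha hb) 2
    _ = 2 ^ (2 * S) := by rw [← pow_mul, mul_comm]

theorem Nat.floor_le_floor_add_one {a b : ℝ} (hb : 0 ≤ b) (h : a < b + 1) :
    ⌊a⌋₊ ≤ ⌊b⌋₊ + 1 :=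
  (Nat.floor_le_floor h.le).trans_eq (Nat.floor_add_one hb)

theorem exists_seg_digit_eq_approxDigits {x : ℝ} (hx : 0 ≤ x) {p q n : ℕ}
    (happ : |x - p / q| < (2 ^ n)⁻¹) :
    ∃ j ≤ 2, seg (fun i => digit x i) n = approxDigits (Nat.pair n j) (Nat.pair p q) := by
  have h2n : (0 : ℝ) < 2 ^ n := by positivity
  set B := p * 2 ^ n / q
  have hB : ⌊(p / q : ℝ) * 2 ^ n⌋₊ = B := by
    rw [div_mul_eq_mul_div, ← Nat.cast_ofNat, ← Nat.cast_pow, ← Nat.cast_mul,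
      Nat.floor_div_eq_div]
  have hclose : |x * 2 ^ n - (p / q : ℝ) * 2 ^ n| < 1 := by
    rw [← sub_mul, abs_mul, abs_of_pos h2n]
    exact (mul_lt_mul_of_pos_right happ h2n).trans_eq (inv_mul_cancel₀ h2n.ne')
  have hN₁ : ⌊x * 2 ^ n⌋₊ ≤ B + 1 :=
    hB ▸ Nat.floor_le_floor_add_one (by positivity) (by linarith [(abs_lt.1 hclose).2])
  have hN₂ : B ≤ ⌊x * 2 ^ n⌋₊ + 1 :=
    hB ▸ Nat.floor_le_floor_add_one (by positivity) (by linarith [(abs_lt.1 hclose).1])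
  refine ⟨⌊x * 2 ^ n⌋₊ + 1 - B, by omega, ?_⟩
  rw [seg_digit_eq_lowBits hx, approxDigits]
  simp only [Nat.unpair_pair]
  congr 1
  omega

theorem exists_K_seg_digit_le : ∃ C : ℕ, ∀ x ∈ Icc (0 : ℝ) 1, ∀ p q n : ℕ, 0 < q →
    |x - p / q| < (2 ^ n)⁻¹ →
    K (seg (fun i => digit x i) n) ≤ C + 2 * Nat.log 2 q + 8 * (n + Nat.log 2 q).size := by
  obtain ⟨C, hC⟩ := exists_Krel_le_two_part_code emptyOracle primrec_approxDigits.to_comp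
  refine ⟨C + 28, fun x hx p q n hq happ => ?_⟩
  obtain ⟨j, hj, hseg⟩ := exists_seg_digit_eq_approxDigits hx.1 happ
  set k := Nat.log 2 q
  set t := (n + k).size
  have hp : p < 2 * q := by
    have h2n₁ : ((2 : ℝ) ^ n)⁻¹ ≤ 1 := inv_le_one_of_one_le₀ (one_le_pow₀ one_le_two)
    have : (p / q : ℝ) < 2 := by linarith [(abs_lt.1 happ).1, hx.2]
    rw [div_lt_iff₀ (by exact_mod_cast hq)] at this
    exact_mod_cast this
  have hq2 : 2 * q < 2 ^ (k + 2) := by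
    have : q < 2 ^ (k + 1) := Nat.lt_pow_succ_log_self one_lt_two q
    rw [pow_succ]
    omega
  have hm : (Nat.pair p q).size ≤ 2 * (k + 2) :=
    Nat.size_pair_le (Nat.size_le.2 (by omega)) (Nat.size_le.2 (by omega))
  have ht : n + k < 2 ^ t := Nat.lt_size_self _
  have h8 : 2 ^ (t + 3) = 8 * 2 ^ t := by ring
  have hn : n.size ≤ t + 3 := Nat.size_le.2 (by omega)
  have hj : j.size ≤ t + 3 := Nat.size_le.2 (by omega)
  have hms : (Nat.pair p q).size.size ≤ t + 3 := Nat.size_le.2 (by omega)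
  have hheader := Nat.size_pair_le (Nat.size_pair_le hn hj) (hms.trans (by omega))
  have := hC (Nat.pair n j) (Nat.pair p q)
  rw [hseg, K]
  omega

theorem tendsto_size_add_one_div_atTop :
    Tendsto (fun n : ℕ => (n.size + 1 : ℝ) / n) atTop (𝓝 0) := by
  have hlog : Tendsto (fun n : ℕ => Real.log n / (1 * n + 0)) atTop (𝓝 0) :=
    (Real.tendsto_pow_log_div_mul_add_atTop 1 0 1 one_ne_zero).comp tendsto_natCast_atTop_atTop
      |>.congr fun n => by simp
  have hinv : Tendsto (fun n : ℕ => (n : ℝ)⁻¹) atTop (𝓝 0) :=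
    tendsto_inv_atTop_zero.comp tendsto_natCast_atTop_atTop
  have hbound : Tendsto (fun n : ℕ => (Real.logb 2 n + 2) / n) atTop (𝓝 0) := by
    simpa [add_div, div_div_eq_mul_div, Real.logb, div_right_comm _ (Real.log 2),
      ← div_eq_mul_inv] using (hlog.div_const (Real.log 2)).add (hinv.const_mul 2)
  refine tendsto_of_tendsto_of_tendsto_of_le_of_le tendsto_const_nhds hbound
    (fun n => by positivity) fun n => div_le_div_of_nonneg_right ?_ n.cast_nonneg
  have hsize : (n.size : ℝ) ≤ Nat.log 2 n + 1 := by
    exact_mod_cast Nat.size_le.2 (Nat.lt_pow_succ_log_self one_lt_two n)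
  have hlogb := Real.natLog_le_logb n 2
  push_cast at hlogb
  linarith

theorem liminf_div_le_of_frequently_le {u e : ℕ → ℝ} {a : ℝ} (hu : ∀ n, 0 ≤ u n)
    (he : Tendsto (fun n => e n / n) atTop (𝓝 0)) (h : ∃ᶠ n in atTop, u n ≤ a * n + e n) :
    liminf (fun n => u n / n) atTop ≤ a := by
  refine le_of_forall_pos_le_add fun ε hε => liminf_le_of_frequently_le ?_
    (isBoundedUnder_of ⟨0, fun n => div_nonneg (hu n) n.cast_nonneg⟩)
  refine (h.and_eventually ((eventually_gt_atTop 0).and (he.eventually (gt_mem_nhds hε)))).mono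
    fun n ⟨hn, hpos, hen⟩ => ?_
  have hpos : (0 : ℝ) < n := Nat.cast_pos.2 hpos
  calc u n / n ≤ (a * n + e n) / n := div_le_div_of_nonneg_right hn hpos.le
    _ = a + e n / n := by rw [add_div, mul_div_cancel_right₀ _ hpos.ne']
    _ ≤ a + ε := by linarith

theorem exists_nat_approx_of_mem_W {s x : ℝ} (hs : 1 ≤ s) (hx : x ∈ W s) (Q : ℕ) :
    ∃ p q : ℕ, Q ≤ q ∧ 0 < q ∧ |x - p / q| < (q : ℝ) ^ (-s) := by
  obtain ⟨⟨hx₀, hx₁⟩, hinf⟩ := hx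
  have hpq : ∀ p q : ℤ, 0 < q → |x - p / q| < (q : ℝ) ^ (-s) → 0 ≤ p ∧ p < 2 * q := by
    intro p q hq happ
    have hqR : (1 : ℝ) ≤ q := by exact_mod_cast hq
    have hinv : (q : ℝ) ^ (-s) ≤ (q : ℝ)⁻¹ := by
      rw [← Real.rpow_neg_one]
      exact Real.rpow_le_rpow_of_exponent_le hqR (by linarith)
    have hinv₁ : (q : ℝ)⁻¹ ≤ 1 := inv_le_one_of_one_le₀ hqR
    obtain ⟨hlo, hhi⟩ := abs_lt.1 (happ.trans_le hinv)
    have h₁ : (-1 : ℝ) < p := by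
      have := (lt_div_iff₀ (by linarith)).1 (show -(q : ℝ)⁻¹ < p / q by linarith)
      rwa [neg_mul, inv_mul_cancel₀ (by linarith)] at this
    have h₂ : (p : ℝ) < 2 * q := (div_lt_iff₀ (by linarith)).1 (by linarith)
    have h₁' : (-1 : ℤ) < p := by exact_mod_cast h₁
    have h₂' : p < 2 * q := by exact_mod_cast h₂
    omega
  by_contra! h
  refine hinf ((Set.finite_Icc ((0, 1) : ℤ × ℤ) (2 * Q, Q)).subset ?_)
  rintro ⟨p, q⟩ ⟨hq, happ⟩
  obtain ⟨hp₀, hp₁⟩ := hpq p q hq happ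
  lift p to ℕ using hp₀
  lift q to ℕ using hq.le
  push_cast at happ hp₁ hq
  have hqQ : q < Q := by
    by_contra! hQ
    exact (h p q hQ (by exact_mod_cast hq)).not_gt happ
  simp only [Set.mem_Icc, Prod.mk_le_mk]
  omega

theorem two_pow_floor_mul_log_le_rpow {s : ℝ} (hs : 0 ≤ s) {q : ℕ} (hq : 0 < q) :
    (2 : ℝ) ^ ⌊s * Nat.log 2 q⌋₊ ≤ (q : ℝ) ^ s := by
  have hlog : (2 : ℝ) ^ Nat.log 2 q ≤ q := by exact_mod_cast Nat.pow_log_le_self 2 hq.ne'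
  calc (2 : ℝ) ^ ⌊s * Nat.log 2 q⌋₊ = (2 : ℝ) ^ (⌊s * Nat.log 2 q⌋₊ : ℝ) :=
        (Real.rpow_natCast _ _).symm
    _ ≤ (2 : ℝ) ^ (s * Nat.log 2 q) :=
        Real.rpow_le_rpow_of_exponent_le one_le_two (Nat.floor_le (by positivity))
    _ = ((2 : ℝ) ^ Nat.log 2 q) ^ s := by
        rw [mul_comm, Real.rpow_mul zero_le_two, Real.rpow_natCast]
    _ ≤ (q : ℝ) ^ s := Real.rpow_le_rpow (by positivity) hlog hs

theorem frequently_K_seg_digit_le {s x : ℝ} (hs : 2 ≤ s) (hx : x ∈ W s) :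
    ∃ D : ℝ, ∃ᶠ n in atTop,
      (K (seg (fun i => digit x i) n) : ℝ) ≤ 2 / s * n + D * (n.size + 1) := by
  obtain ⟨C, hC⟩ := exists_K_seg_digit_le
  refine ⟨C + 9, frequently_atTop.2 fun N => ?_⟩
  obtain ⟨p, q, hqN, hq, happ⟩ := exists_nat_approx_of_mem_W (by linarith) hx (2 ^ N)
  set k := Nat.log 2 q
  set n := ⌊s * k⌋₊
  have hkN : N ≤ k := Nat.le_log_of_pow_le one_lt_two hqN
  have h2k : 2 * k ≤ n := Nat.le_floor (by push_cast; nlinarith)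
  have hk : 2 * (k : ℝ) ≤ 2 / s * n + 1 := by
    have hfloor : s * k < n + 1 := Nat.lt_floor_add_one (s * k)
    rw [show 2 / s * n + 1 = (2 * n + s) / s by field_simp, le_div_iff₀ (by linarith)]
    nlinarith
  have hsize : (n + k).size ≤ n.size + 1 := Nat.size_le.2 <| by
    have := Nat.lt_size_self n
    rw [pow_succ]
    omega
  have hdyadic : |x - p / q| < (2 ^ n)⁻¹ :=
    happ.trans_le <| by
      rw [Real.rpow_neg (by positivity)]
      exact inv_anti₀ (by positivity) (two_pow_floor_mul_log_le_rpow (by linarith) hq)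
  refine ⟨n, by omega, ?_⟩
  have hK : K (seg (fun i => digit x i) n) ≤ C + 2 * k + 8 * (n + k).size :=
    hC x hx.1 p q n hq hdyadic
  have : (K (seg (fun i => digit x i) n) : ℝ) ≤ C + 2 * k + 8 * (n.size + 1) := by
    exact_mod_cast hK.trans (by omega)
  nlinarith

/-- for `s ≥ 2`, every `s`-well approximable number has effective
dimension at most `2/s`. -/
theorem stmt1 (s : ℝ) (hs : 2 ≤ s) :
    W s ⊆ {x ∈ Set.Icc (0 : ℝ) 1 | realDim x ≤ 2 / s} := by
  intro x hx
  obtain ⟨D, hD⟩ := frequently_K_seg_digit_le hs hx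
  have hD₀ : Tendsto (fun n : ℕ => D * (n.size + 1) / n) atTop (𝓝 0) := by
    simpa only [mul_div_assoc, mul_zero] using tendsto_size_add_one_div_atTop.const_mul D
  exact ⟨hx.1, liminf_div_le_of_frequently_le (fun n => Nat.cast_nonneg _) hD₀ hD⟩
end

section
/- For every 0 < s < 1 there exists a gauge function f such that: (1) lim_{x→0+} x^{-1}f(x) = ∞; (2) x^{-1}f(x) is monotonically decreasing; (3) ∑_{q=1}^∞ q·f(q^{-2/s}) < ∞; and (4) for every r ∈ (s,1] it is not the case that f(x) ≤ x^r for all sufficiently small x. -/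
open Filter Set

/-!
Instead of the piecewise gauge, take `f x = x ^ s / (1 + c log (1 + 1/x)) ^ 2` with
`c = (1 - s) / 2`. For `r > s` one has `f x / x ^ r = (x ^ ((r - s) / 2) (1 + c log (1 + 1/x)))⁻²`,
and the base tends to `0` at `0⁺` because a logarithm is beaten by any power: this gives (1) and (4).
For `r = 1` the base is increasing as soon as `c ≤ (1 - s) / 2`, which is (2). At `x = q ^ (-2/s)`
the logarithm is at least `(2/s) log q`, so `q f (q ^ (-2/s)) ≤ 1 / (q (1 + (2c/s) log q) ^ 2)`,
a series that converges by Cauchy condensation.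
-/

open Real Topology

lemma summable_one_div_nat_mul_one_add_mul_log_sq {b : ℝ} (hb : 0 < b) :
    Summable fun n : ℕ => 1 / (n * (1 + b * log n) ^ 2) := by
  have hanti : ∀ ⦃m n : ℕ⦄, 0 < m → m ≤ n →
      1 / ((n : ℝ) * (1 + b * log n) ^ 2) ≤ 1 / ((m : ℝ) * (1 + b * log m) ^ 2) := by
    intro m n hm hmn
    have hm1 : (1 : ℝ) ≤ m := by exact_mod_cast hm
    have hmn' : (m : ℝ) ≤ n := by exact_mod_cast hmn
    have hlog : 0 ≤ log (m : ℝ) := log_nonneg hm1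
    have hlogmn : log (m : ℝ) ≤ log n := log_le_log (by linarith) hmn'
    apply one_div_le_one_div_of_le (by positivity)
    gcongr
  rw [← summable_condensed_iff_of_nonneg (fun n => by positivity) hanti]
  set B := b * log 2
  have hB : 0 < B := mul_pos hb (log_pos one_lt_two)
  refine (((Real.summable_one_div_nat_add_rpow B⁻¹ 2).2 one_lt_two).mul_left (B⁻¹ ^ 2)).congr
    fun k => ?_
  have hk : 0 < (k : ℝ) + B⁻¹ := by positivity
  push_cast
  rw [log_pow, abs_of_pos hk, rpow_two]
  field_simp
  ring

lemma tendsto_rpow_nhdsGT_zero {a : ℝ} (ha : 0 < a) :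
    Tendsto (fun x : ℝ => x ^ a) (𝓝[>] 0) (𝓝 0) := by
  have := (continuousAt_rpow_const 0 a (Or.inr ha.le)).tendsto
  rw [zero_rpow ha.ne'] at this
  exact this.mono_left nhdsWithin_le_nhds

noncomputable def logDamping (c x : ℝ) : ℝ := 1 + c * log (1 + x⁻¹)

noncomputable def logGauge (s c x : ℝ) : ℝ := x ^ s / logDamping c x ^ 2

section LogGauge

variable {s c : ℝ}

lemma one_le_logDamping (hc : 0 ≤ c) {x : ℝ} (hx : 0 ≤ x) : 1 ≤ logDamping c x := by
  have : 0 ≤ log (1 + x⁻¹) := log_nonneg (by simp [inv_nonneg.2 hx])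
  unfold logDamping
  nlinarith

lemma logDamping_le_add_log_div (hc : 0 ≤ c) {x y : ℝ} (hx : 0 < x) (hxy : x ≤ y) :
    logDamping c x ≤ logDamping c y + c * log (y / x) := by
  have hy : 0 < y := hx.trans_le hxy
  have key : 1 + x⁻¹ ≤ y / x * (1 + y⁻¹) := by
    rw [show y / x * (1 + y⁻¹) = (y + 1) / x by field_simp,
      show 1 + x⁻¹ = (x + 1) / x by field_simp]
    gcongr
  have hlog : log (1 + x⁻¹) ≤ log (y / x) + log (1 + y⁻¹) := by
    rw [← log_mul (by positivity) (by positivity)]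
    exact log_le_log (by positivity) key
  unfold logDamping
  nlinarith

lemma monotoneOn_rpow_mul_logDamping {a : ℝ} (hc : 0 ≤ c) (hca : c ≤ a) :
    MonotoneOn (fun x => x ^ a * logDamping c x) (Ioi 0) := by
  intro x hx y hy hxy
  have hx : 0 < x := hx
  set t := y / x with ht
  have ht1 : 1 ≤ t := (one_le_div hx).2 hxy
  have hyt : y = t * x := by rw [ht]; field_simp
  have hlog : 0 ≤ log t := log_nonneg ht1
  -- the extra logarithm `c log t` gained by `logDamping` from `y` down to `x` is paid by `t ^ a`
  have hta : c * log t ≤ t ^ a - 1 := calc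
    c * log t ≤ a * log t := by gcongr
    _ = log (t ^ a) := (log_rpow (by linarith) a).symm
    _ ≤ t ^ a - 1 := log_le_sub_one_of_pos (by positivity)
  have hD := logDamping_le_add_log_div hc hx hxy
  have hDy := one_le_logDamping hc hy.out.le
  have hta1 : 1 ≤ t ^ a := one_le_rpow ht1 (hc.trans hca)
  simp only
  rw [hyt, mul_rpow (by linarith) hx.le, ← hyt]
  have hxa : 0 < x ^ a := by positivity
  have : logDamping c x ≤ t ^ a * logDamping c y := by nlinarith
  calc x ^ a * logDamping c x ≤ x ^ a * (t ^ a * logDamping c y) := by gcongr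
    _ = _ := by ring

lemma tendsto_rpow_mul_logDamping_nhdsGT_zero {a : ℝ} (ha : 0 < a) :
    Tendsto (fun x => x ^ a * logDamping c x) (𝓝[>] 0) (𝓝 0) := by
  have hpow := tendsto_rpow_nhdsGT_zero ha
  have hlog : Tendsto (fun x : ℝ => log (x + 1)) (𝓝[>] 0) (𝓝 0) := by
    have : ContinuousAt (fun x : ℝ => log (x + 1)) 0 := by fun_prop (disch := norm_num)
    simpa using this.tendsto.mono_left nhdsWithin_le_nhds
  have hlim := hpow.add (((hpow.mul hlog).sub (tendsto_log_mul_rpow_nhdsGT_zero ha)).const_mul c)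
  simp only [mul_zero, sub_zero, add_zero] at hlim
  refine hlim.congr' ?_
  filter_upwards [self_mem_nhdsWithin] with x (hx : 0 < x)
  rw [logDamping, show 1 + x⁻¹ = (x + 1) / x by field_simp, log_div (by positivity) hx.ne']
  ring

lemma logGauge_pos (hc : 0 ≤ c) {x : ℝ} (hx : 0 < x) : 0 < logGauge s c x := by
  have := one_le_logDamping hc hx.le
  unfold logGauge
  positivity

lemma logGauge_div_rpow {r x : ℝ} (hx : 0 < x) :
    logGauge s c x / x ^ r = ((x ^ ((r - s) / 2) * logDamping c x) ^ 2)⁻¹ := by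
  rw [mul_pow, ← rpow_mul_natCast hx.le, Nat.cast_ofNat, div_mul_cancel₀ _ two_ne_zero,
    rpow_sub hx, logGauge]
  field_simp

lemma isGauge_logGauge (hs : 0 < s) (hc : 0 ≤ c) : IsGauge (logGauge s c) := by
  refine ⟨?_, fun x hx => logGauge_pos hc hx, ?_, ?_⟩
  · intro x (hx : 0 < x)
    have hD := one_le_logDamping hc hx.le
    have : ContinuousAt (logDamping c) x := by
      unfold logDamping
      fun_prop (disch := positivity)
    exact ((continuousAt_rpow_const x s (Or.inl hx.ne')).div (this.pow 2)
      (pow_pos (by linarith) 2).ne').continuousWithinAt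
  · intro x (hx : 0 < x) y (hy : 0 < y) hxy
    have := one_le_logDamping hc hy.le
    have hD : logDamping c y ≤ logDamping c x := by unfold logDamping; gcongr
    unfold logGauge
    gcongr
  · refine squeeze_zero' ?_ ?_ (tendsto_rpow_nhdsGT_zero hs)
    · filter_upwards [self_mem_nhdsWithin] with x (hx : 0 < x)
      exact (logGauge_pos hc hx).le
    · filter_upwards [self_mem_nhdsWithin] with x (hx : 0 < x)
      exact div_le_self (by positivity) (one_le_pow₀ (one_le_logDamping hc hx.le))

lemma tendsto_logGauge_div_rpow (hc : 0 ≤ c) {r : ℝ} (hsr : s < r) :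
    Tendsto (fun x => logGauge s c x / x ^ r) (𝓝[>] 0) atTop := by
  have hsq : Tendsto (fun x => (x ^ ((r - s) / 2) * logDamping c x) ^ 2) (𝓝[>] 0) (𝓝[>] 0) := by
    refine tendsto_nhdsWithin_iff.2 ⟨?_, ?_⟩
    · have h0 := tendsto_rpow_mul_logDamping_nhdsGT_zero (c := c) (a := (r - s) / 2) (by linarith)
      simpa using h0.pow 2
    · filter_upwards [self_mem_nhdsWithin] with x (hx : 0 < x)
      have := one_le_logDamping hc hx.le
      exact mem_Ioi.2 (pow_pos (mul_pos (by positivity) (by linarith)) 2)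
  refine (tendsto_inv_nhdsGT_zero.comp hsq).congr' ?_
  filter_upwards [self_mem_nhdsWithin] with x (hx : 0 < x)
  exact (logGauge_div_rpow hx).symm

lemma ratioDecreasing_logGauge (hc : 0 ≤ c) (hcs : c ≤ (1 - s) / 2) :
    RatioDecreasing (logGauge s c) := by
  intro x (hx : 0 < x) y (hy : 0 < y) hxy
  have hmono := monotoneOn_rpow_mul_logDamping hc hcs hx hy hxy
  have hpos : 0 < x ^ ((1 - s) / 2) * logDamping c x :=
    mul_pos (by positivity) (by linarith [one_le_logDamping hc hx.le])
  have hratio : ∀ z : ℝ, 0 < z →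
      logGauge s c z / z = ((z ^ ((1 - s) / 2) * logDamping c z) ^ 2)⁻¹ := fun z hz => by
    simpa using logGauge_div_rpow (r := 1) hz
  simp only at hmono ⊢
  rw [hratio x hx, hratio y hy]
  gcongr

lemma not_leStar_logGauge_rpow (hc : 0 ≤ c) {r : ℝ} (hsr : s < r) :
    ¬ LeStar (logGauge s c) (fun x => x ^ r) := by
  rintro ⟨δ, hδ, hle⟩
  have hsmall : ∀ᶠ x in 𝓝[>] 0, x ∈ Ioo 0 δ := Ioo_mem_nhdsGT hδ
  obtain ⟨x, hgt, hx, hxδ⟩ :=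
    ((tendsto_logGauge_div_rpow hc hsr).eventually_gt_atTop 1 |>.and hsmall).exists
  have := (div_le_one (by positivity)).2 (hle x hx hxδ)
  linarith

lemma logGauge_rpow_neg_le {p Q : ℝ} (hc : 0 ≤ c) (hp : 0 ≤ p) (hQ : 1 ≤ Q) :
    logGauge s c (Q ^ (-p)) ≤ Q ^ (-(p * s)) / (1 + c * p * log Q) ^ 2 := by
  have hQ0 : 0 < Q := by linarith
  have hlogQ : 0 ≤ log Q := log_nonneg hQ
  have hlog : p * log Q ≤ log (1 + (Q ^ (-p))⁻¹) := by
    rw [rpow_neg hQ0.le, inv_inv, ← log_rpow hQ0]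
    exact log_le_log (by positivity) (by linarith)
  unfold logGauge logDamping
  rw [← rpow_mul hQ0.le, neg_mul, mul_assoc]
  gcongr

lemma summable_mul_logGauge_rpow_neg (hs : 0 < s) (hc : 0 < c) :
    Summable fun q : ℕ => ((q : ℝ) + 1) * logGauge s c (((q : ℝ) + 1) ^ (-(2 / s))) := by
  have hF := (summable_nat_add_iff 1).2
    (summable_one_div_nat_mul_one_add_mul_log_sq (b := c * (2 / s)) (by positivity))
  push_cast at hF
  refine Summable.of_nonneg_of_le (fun q => ?_) (fun q => ?_) hF
  · exact mul_nonneg (by positivity) (logGauge_pos hc.le (by positivity)).le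
  · have hQ : (1 : ℝ) ≤ q + 1 := by linarith [q.cast_nonneg (α := ℝ)]
    have hlog : 0 ≤ log ((q : ℝ) + 1) := log_nonneg hQ
    calc ((q : ℝ) + 1) * logGauge s c (((q : ℝ) + 1) ^ (-(2 / s)))
        ≤ ((q : ℝ) + 1) * (((q : ℝ) + 1) ^ (-(2 / s * s)) /
            (1 + c * (2 / s) * log ((q : ℝ) + 1)) ^ 2) := by
          gcongr
          exact logGauge_rpow_neg_le hc.le (by positivity) hQ
      _ = 1 / (((q : ℝ) + 1) * (1 + c * (2 / s) * log ((q : ℝ) + 1)) ^ 2) := by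
          rw [div_mul_cancel₀ _ hs.ne', rpow_neg (by positivity), rpow_two]
          field_simp

end LogGauge

theorem stmt4 (s : ℝ) (hs0 : 0 < s) (hs1 : s < 1) :
    ∃ f : ℝ → ℝ, IsGauge f ∧
      Filter.Tendsto (fun x => f x / x) (nhdsWithin 0 (Set.Ioi 0)) Filter.atTop ∧
      RatioDecreasing f ∧
      Summable (fun q : ℕ => ((q : ℝ) + 1) * f (((q : ℝ) + 1) ^ (-(2 / s)))) ∧
      ∀ r : ℝ, s < r → r ≤ 1 → ¬ LeStar f (fun x => x ^ r) := by
  have hc : 0 < (1 - s) / 2 := by linarith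
  refine ⟨logGauge s ((1 - s) / 2), isGauge_logGauge hs0 hc.le, ?_,
    ratioDecreasing_logGauge hc.le le_rfl, summable_mul_logGauge_rpow_neg hs0 hc,
    fun r hsr _ => not_leStar_logGauge_rpow hc.le hsr⟩
  simpa using tendsto_logGauge_div_rpow (r := 1) hc.le hs1
end

section
/- For a set A ⊆ 2^ω of positive Lebesgue (uniform coin-flipping) measure and any gauge function f, H^f(A) > 0 if and only if liminf_{x→0+} x^{-1}f(x) > 0. -/
/-! Only dyadic scales matter. Covering `2^ω` by all `2^m` cylinders of length `m` costs
`2^m f(2^{-m})`; if `liminf f(x)/x = 0`, monotonicity of `f` transfers a small value of `f(x)/x`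
to the dyadic point just below `x`, so these costs become arbitrarily small along a sequence of `m`
and `H^f` vanishes. If instead `f(x) ≥ c x` near `0`, every fine cover costs at least `c` times its
Lebesgue cost, so `H^f(A) ≥ c μ(A) > 0`. -/

open Filter Set

open scoped ENNReal

lemma two_rpow_neg_natCast (m : ℕ) : (2 : ℝ) ^ (-(m : ℝ)) = ((2 : ℝ) ^ m)⁻¹ := by
  rw [Real.rpow_neg zero_le_two, Real.rpow_natCast]

lemma tendsto_two_rpow_neg_natCast :
    Tendsto (fun m : ℕ => (2 : ℝ) ^ (-(m : ℝ))) atTop (nhdsWithin 0 (Ioi 0)) := by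
  simp_rw [two_rpow_neg_natCast]
  exact tendsto_inv_atTop_nhdsGT_zero.comp (tendsto_pow_atTop_atTop_of_one_lt one_lt_two)

noncomputable def HfLevel (f : ℝ → ℝ) (A : Set (ℕ → Bool)) (n : ℕ) : ℝ≥0∞ :=
  ⨅ (C : ℕ → Option (List Bool)) (_ : A ⊆ ⋃ i, cylOpt (C i))
    (_ : ∀ i σ, C i = some σ → n ≤ σ.length), ∑' i, gaugeCost f (C i)

lemma Hf_eq_iSup_HfLevel (f : ℝ → ℝ) (A : Set (ℕ → Bool)) : Hf f A = ⨆ n, HfLevel f A n := rfl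

lemma HfLevel_le_tsum {f : ℝ → ℝ} {A : Set (ℕ → Bool)} {n : ℕ} {C : ℕ → Option (List Bool)}
    (hcov : A ⊆ ⋃ i, cylOpt (C i)) (hlen : ∀ i σ, C i = some σ → n ≤ σ.length) :
    HfLevel f A n ≤ ∑' i, gaugeCost f (C i) :=
  iInf₂_le_of_le C hcov (iInf_le _ hlen)

lemma HfLevel_mono (f : ℝ → ℝ) (A : Set (ℕ → Bool)) : Monotone (HfLevel f A) :=
  fun _ _ hnm => le_iInf₂ fun _ hcov => le_iInf fun hlen =>
    HfLevel_le_tsum hcov fun i σ hi => hnm.trans (hlen i σ hi)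

lemma exists_cover_by_level (m : ℕ) : ∃ C : ℕ → Option (List Bool),
    univ ⊆ ⋃ i, cylOpt (C i) ∧ (∀ i σ, C i = some σ → σ.length = m) ∧
    ∀ f : ℝ → ℝ, ∑' i, gaugeCost f (C i) = 2 ^ m * ENNReal.ofReal (f ((2 : ℝ) ^ (-(m : ℝ)))) := by
  let e : (Fin m → Bool) ≃ Fin (2 ^ m) := Fintype.equivFinOfCardEq (by simp)
  let C : ℕ → Option (List Bool) := fun i =>
    if h : i < 2 ^ m then some (List.ofFn (e.symm ⟨i, h⟩)) else none
  refine ⟨C, fun y _ => mem_iUnion.mpr ⟨e fun j => y j, ?_⟩, fun i σ h => ?_, fun f => ?_⟩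
  · simp [C, cylOpt]
  · simp only [C] at h
    split at h <;> grind [List.length_ofFn]
  · have hC : ∀ i ∈ Finset.range (2 ^ m),
        gaugeCost f (C i) = ENNReal.ofReal (f ((2 : ℝ) ^ (-(m : ℝ)))) := fun i hi => by
      simp [C, Finset.mem_range.mp hi, gaugeCost]
    rw [tsum_eq_sum (s := Finset.range (2 ^ m)) fun i hi => by
        simp [C, Finset.mem_range.not.mp hi, gaugeCost],
      Finset.sum_congr rfl hC, Finset.sum_const, Finset.card_range, nsmul_eq_mul]
    norm_cast

lemma Hf_le_of_frequently {f : ℝ → ℝ} (A : Set (ℕ → Bool)) {ε : ℝ}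
    (h : ∃ᶠ m : ℕ in atTop, f ((2 : ℝ) ^ (-(m : ℝ))) ≤ ε * (2 : ℝ) ^ (-(m : ℝ))) :
    Hf f A ≤ ENNReal.ofReal ε := by
  refine iSup_le fun n => ?_
  obtain ⟨m, hnm, hm⟩ := frequently_atTop.mp h n
  obtain ⟨C, hcov, hlen, hsum⟩ := exists_cover_by_level m
  calc HfLevel f A n
      ≤ ∑' i, gaugeCost f (C i) :=
        HfLevel_le_tsum ((subset_univ A).trans hcov) fun i σ h => (hlen i σ h).ge.trans' hnm
    _ = 2 ^ m * ENNReal.ofReal (f ((2 : ℝ) ^ (-(m : ℝ)))) := hsum f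
    _ ≤ 2 ^ m * ENNReal.ofReal (ε * ((2 : ℝ) ^ m)⁻¹) := by
        rw [← two_rpow_neg_natCast]; gcongr
    _ = ENNReal.ofReal ε := by
        rw [ENNReal.ofReal_mul' (by positivity), ENNReal.ofReal_inv_of_pos (by positivity),
          ENNReal.ofReal_pow zero_le_two, ENNReal.ofReal_ofNat, mul_left_comm,
          ENNReal.mul_inv_cancel (by simp) (by simp), mul_one]

lemma mul_Hf_le_Hf {f g : ℝ → ℝ} (A : Set (ℕ → Bool)) {c : ℝ≥0∞}
    (h : ∀ᶠ n : ℕ in atTop,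
      c * ENNReal.ofReal (g ((2 : ℝ) ^ (-(n : ℝ)))) ≤ ENNReal.ofReal (f ((2 : ℝ) ^ (-(n : ℝ))))) :
    c * Hf g A ≤ Hf f A := by
  obtain ⟨N, hN⟩ := eventually_atTop.mp h
  have hcost : ∀ o : Option (List Bool), (∀ σ, o = some σ → N ≤ σ.length) →
      c * gaugeCost g o ≤ gaugeCost f o
    | none, _ => by simp [gaugeCost]
    | some σ, ho => hN σ.length (ho σ rfl)
  rw [Hf_eq_iSup_HfLevel, ENNReal.mul_iSup]
  refine iSup_le fun n => ?_
  calc c * HfLevel g A n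
      ≤ c * HfLevel g A (max n N) := by gcongr; exact HfLevel_mono g A (le_max_left n N)
    _ ≤ HfLevel f A (max n N) := by
        refine le_iInf₂ fun C hcov => le_iInf fun hlen => ?_
        calc c * HfLevel g A (max n N)
            ≤ c * ∑' i, gaugeCost g (C i) := by gcongr; exact HfLevel_le_tsum hcov hlen
          _ = ∑' i, c * gaugeCost g (C i) := ENNReal.tsum_mul_left.symm
          _ ≤ ∑' i, gaugeCost f (C i) := ENNReal.tsum_le_tsum fun i =>
              hcost (C i) fun σ h => (le_max_right n N).trans (hlen i σ h)
    _ ≤ Hf f A := le_iSup (HfLevel f A) (max n N)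

section Gauge

variable {f : ℝ → ℝ}

lemma eventually_mul_le_of_lt_liminf {c : ℝ≥0∞}
    (hc : c < liminf (fun x : ℝ => ENNReal.ofReal (f x / x)) (nhdsWithin 0 (Ioi 0))) :
    ∀ᶠ n : ℕ in atTop,
      c * ENNReal.ofReal ((2 : ℝ) ^ (-(n : ℝ))) ≤ ENNReal.ofReal (f ((2 : ℝ) ^ (-(n : ℝ)))) := by
  refine (tendsto_two_rpow_neg_natCast.eventually (eventually_lt_of_lt_liminf hc)).mono
    fun n hn => ?_
  have hx : 0 < (2 : ℝ) ^ (-(n : ℝ)) := by positivity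
  have hfx : 0 ≤ f ((2 : ℝ) ^ (-(n : ℝ))) / (2 : ℝ) ^ (-(n : ℝ)) := by
    by_contra! h
    rw [ENNReal.ofReal_of_nonpos h.le] at hn
    exact ENNReal.not_lt_zero hn
  calc c * ENNReal.ofReal ((2 : ℝ) ^ (-(n : ℝ)))
      ≤ ENNReal.ofReal (f ((2 : ℝ) ^ (-(n : ℝ))) / (2 : ℝ) ^ (-(n : ℝ)))
        * ENNReal.ofReal ((2 : ℝ) ^ (-(n : ℝ))) := by gcongr
    _ = ENNReal.ofReal (f ((2 : ℝ) ^ (-(n : ℝ)))) := by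
        rw [← ENNReal.ofReal_mul hfx, div_mul_cancel₀ _ hx.ne']

/-- Between `2 ^ (-(m+1))` and `2 ^ (-m)` the monotone `f` can lose at most a factor `2` in
`f x / x`, so small values of `f x / x` are seen along the dyadic points. -/
lemma frequently_le_mul_of_liminf_eq_zero (hmono : MonotoneOn f (Ioi 0))
    (h0 : liminf (fun x : ℝ => ENNReal.ofReal (f x / x)) (nhdsWithin 0 (Ioi 0)) = 0)
    {ε : ℝ} (hε : 0 < ε) :
    ∃ᶠ m : ℕ in atTop, f ((2 : ℝ) ^ (-(m : ℝ))) ≤ ε * (2 : ℝ) ^ (-(m : ℝ)) := by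
  simp_rw [two_rpow_neg_natCast, frequently_atTop]
  intro N
  have hfreq : ∃ᶠ x in nhdsWithin (0 : ℝ) (Ioi 0),
      ENNReal.ofReal (f x / x) < ENNReal.ofReal (ε / 2) :=
    frequently_lt_of_liminf_lt (by isBoundedDefault) (by rw [h0]; positivity)
  obtain ⟨x, hfx, hx0, hxN⟩ := (hfreq.and_eventually
    (Ioo_mem_nhdsGT (show (0 : ℝ) < ((2 : ℝ) ^ N)⁻¹ by positivity))).exists
  rw [ENNReal.ofReal_lt_ofReal_iff (by positivity), div_lt_iff₀ hx0] at hfx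
  obtain ⟨k, hk, hk'⟩ := exists_nat_pow_near (one_le_inv_iff₀.mpr
    ⟨hx0, hxN.le.trans (inv_le_one_of_one_le₀ (one_le_pow₀ one_le_two))⟩) one_lt_two
  have hxk : ((2 : ℝ) ^ (k + 1))⁻¹ < x := (inv_lt_comm₀ hx0 (by positivity)).mp hk'
  refine ⟨k + 1, ?_, ?_⟩
  · have : (2 : ℝ) ^ N < 2 ^ (k + 1) :=
      (lt_inv_comm₀ hx0 (by positivity)).mp hxN |>.trans hk'
    exact ((pow_lt_pow_iff_right₀ one_lt_two).mp this).le
  · calc f ((2 : ℝ) ^ (k + 1))⁻¹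
        ≤ f x := hmono (by simp only [mem_Ioi]; positivity) hx0 hxk.le
      _ ≤ ε / 2 * x := hfx.le
      _ ≤ ε / 2 * ((2 : ℝ) ^ k)⁻¹ := by gcongr; exact (le_inv_comm₀ (by positivity) hx0).mp hk
      _ = ε * ((2 : ℝ) ^ (k + 1))⁻¹ := by rw [pow_succ]; field_simp

lemma Hf_eq_zero_of_liminf_eq_zero (hmono : MonotoneOn f (Ioi 0)) (A : Set (ℕ → Bool))
    (h0 : liminf (fun x : ℝ => ENNReal.ofReal (f x / x)) (nhdsWithin 0 (Ioi 0)) = 0) :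
    Hf f A = 0 :=
  le_antisymm (ENNReal.le_of_forall_pos_le_add fun ε hε _ => by
    simpa using Hf_le_of_frequently A (frequently_le_mul_of_liminf_eq_zero hmono h0 hε)) bot_le

end Gauge

theorem stmt6 (f : ℝ → ℝ) (hf : IsGauge f) (A : Set (ℕ → Bool)) (hA : 0 < muC A) :
    0 < Hf f A ↔
      0 < Filter.liminf (fun x : ℝ => ENNReal.ofReal (f x / x))
            (nhdsWithin 0 (Set.Ioi 0)) := by
  refine ⟨fun hHf => pos_iff_ne_zero.mpr fun h0 => ?_, fun hlim => ?_⟩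
  · exact hHf.ne' (Hf_eq_zero_of_liminf_eq_zero hf.2.2.1 A h0)
  · obtain ⟨c, hc0, hc⟩ := exists_between hlim
    calc 0 < c * muC A := ENNReal.mul_pos hc0.ne' hA.ne'
      _ ≤ Hf f A := mul_Hf_le_Hf A (eventually_mul_le_of_lt_liminf hc)
end

section
/- If x^{-1}f(x) is monotonically decreasing and, for every r ∈ (s,1], f is not eventually dominated near 0 by x^r, then there exists a gauge function g with lim_{x→0+} f(x)/g(x) = 0 such that x^{-1}g(x) is monotonically decreasing and, for every r ∈ (s,1], g is not eventually dominated near 0 by x^r. -/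
open Filter Set

/-!
Take `g = √f`. Then `f / g = √f → 0`, and `√f(x) / x = √((f(x) / x) · x⁻¹)` is decreasing as
the square root of a product of two nonnegative decreasing functions. Near `0` we have `f ≤ 1`,
hence `f ≤ √f`, so any bound `√f ≤ x ^ r` near `0` would also bound `f`.
-/

open Topology

theorem LeStar.trans {f g h : ℝ → ℝ} (hfg : LeStar f g) (hgh : LeStar g h) : LeStar f h := by
  obtain ⟨δ, hδ, hfg⟩ := hfg
  obtain ⟨ε, hε, hgh⟩ := hgh
  exact ⟨min δ ε, lt_min hδ hε, fun x hx hxδ =>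
    (hfg x hx (hxδ.trans_le (min_le_left _ _))).trans (hgh x hx (hxδ.trans_le (min_le_right _ _)))⟩

theorem leStar_of_eventually_le {f g : ℝ → ℝ} (h : ∀ᶠ x in 𝓝[>] 0, f x ≤ g x) : LeStar f g := by
  obtain ⟨δ, hδ, hsub⟩ := mem_nhdsGT_iff_exists_Ioo_subset.mp h
  exact ⟨δ, hδ, fun x hx hxδ => hsub ⟨hx, hxδ⟩⟩

namespace IsGauge

variable {f : ℝ → ℝ}

theorem sqrt (hf : IsGauge f) : IsGauge fun x => √(f x) := by
  obtain ⟨hcont, hpos, hmono, hlim⟩ := hf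
  refine ⟨Real.continuous_sqrt.comp_continuousOn hcont, fun x hx => Real.sqrt_pos.mpr (hpos x hx),
    fun a ha b hb hab => Real.sqrt_le_sqrt (hmono ha hb hab), ?_⟩
  simpa [Function.comp_def] using (Real.continuous_sqrt.tendsto 0).comp hlim

theorem tendsto_div_sqrt (hf : IsGauge f) :
    Tendsto (fun x => f x / √(f x)) (𝓝[>] 0) (𝓝 0) := by
  simpa only [Real.div_sqrt] using hf.sqrt.2.2.2

theorem leStar_sqrt (hf : IsGauge f) : LeStar f fun x => √(f x) := by
  have hsmall : ∀ᶠ x in 𝓝[>] 0, f x < 1 := hf.2.2.2 (Iio_mem_nhds one_pos)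
  apply leStar_of_eventually_le
  filter_upwards [hsmall, self_mem_nhdsWithin] with x hx1 hx0
  have hfx : 0 ≤ f x := (hf.2.1 x hx0).le
  rw [Real.le_sqrt hfx hfx]
  nlinarith

end IsGauge

theorem RatioDecreasing.sqrt {f : ℝ → ℝ} (hnonneg : ∀ x, 0 < x → 0 ≤ f x)
    (h : RatioDecreasing f) :
    RatioDecreasing fun x => √(f x) := by
  have hrepr : ∀ x, 0 < x → √(f x) / x = √(f x / x * x⁻¹) := fun x hx => by
    rw [← div_eq_mul_inv, div_div, ← sq, Real.sqrt_div (hnonneg x hx), Real.sqrt_sq hx.le]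
  intro a ha b hb hab
  dsimp only
  rw [hrepr a ha, hrepr b hb]
  exact Real.sqrt_le_sqrt (mul_le_mul (h ha hb hab) (inv_anti₀ ha hab)
    (inv_nonneg.mpr (le_of_lt hb)) (div_nonneg (hnonneg a ha) (le_of_lt ha)))

theorem stmt13_general (s : ℝ)
    (f : ℝ → ℝ) (hf : IsGauge f) (hdec : RatioDecreasing f)
    (hnd : ∀ r : ℝ, s < r → r ≤ 1 → ¬ LeStar f (fun x => x ^ r)) :
    ∃ g : ℝ → ℝ, IsGauge g ∧
      Filter.Tendsto (fun x => f x / g x) (nhdsWithin 0 (Set.Ioi 0)) (nhds 0) ∧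
      RatioDecreasing g ∧
      ∀ r : ℝ, s < r → r ≤ 1 → ¬ LeStar g (fun x => x ^ r) := by
  refine ⟨fun x => √(f x), hf.sqrt, hf.tendsto_div_sqrt,
    hdec.sqrt fun x hx => (hf.2.1 x hx).le, fun r hsr hr1 hle => ?_⟩
  exact hnd r hsr hr1 (hf.leStar_sqrt.trans hle)

theorem stmt13 (s : ℝ) (hs0 : 0 ≤ s) (hs1 : s < 1)
    (f : ℝ → ℝ) (hf : IsGauge f) (hdec : RatioDecreasing f)
    (hnd : ∀ r : ℝ, s < r → r ≤ 1 → ¬ LeStar f (fun x => x ^ r)) :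
    ∃ g : ℝ → ℝ, IsGauge g ∧
      Filter.Tendsto (fun x => f x / g x) (nhdsWithin 0 (Set.Ioi 0)) (nhds 0) ∧
      RatioDecreasing g ∧
      ∀ r : ℝ, s < r → r ≤ 1 → ¬ LeStar g (fun x => x ^ r) :=
  stmt13_general s f hf hdec hnd
end

section
/- Let 0 ≤ s < 1 and suppose for every r ∈ (s,1] and every ε > 0 there exists x ∈ (0,ε) with f(x) > x^r, where x^{-1}f(x) is monotonically decreasing. Then there exist sequences (l_n) of integers and (r_n*) of rationals such that: l_0 = 0, l_{n+1} > 2^n + l_n, r_n* = ⌈r_n·l_{n+1}⌉/l_{n+1} for a fixed decreasing sequence r_n → s with r_n > s, (r_n*) is decreasing with r_n* → s, and f(2^{-l_{n+1}}) > 2^{-l_{n+1}·r_n*} for all n. -/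
open Filter Set

/-! Since `f x / x` decreases, a witness `x` of `f x > x ^ ρ` passes to the dyadic point `2⁻ˡ`
just below it at the cost of a factor `2 ^ (ρ - 1)`, which is absorbed by raising the exponent
from `ρ` to any `t > ρ` once `l` is large. So for every `n` there are infinitely many `l` with
`f (2⁻ˡ) > 2 ^ (-l r_n)`, and `l_{n+1}` can be picked among them recursively, large enough that
`1 / l_{n+1}` lies below the gap `r_n - r_{n+1}`. Rounding `r_n l_{n+1}` up moves `r_n` by less
than `1 / l_{n+1}`; this keeps `(r_n^*)` decreasing with limit `s`, and only lowers `2 ^ (-l r_n)`. -/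

theorem RatioDecreasing.rpow_sub_one_mul_lt {f : ℝ → ℝ} (hf : RatioDecreasing f) {x y ρ : ℝ}
    (hy : 0 < y) (hyx : y ≤ x) (hfx : x ^ ρ < f x) : x ^ (ρ - 1) * y < f y := by
  have hx : 0 < x := hy.trans_le hyx
  calc x ^ (ρ - 1) * y = x ^ ρ / x * y := by rw [Real.rpow_sub_one hx.ne']
    _ < f x / x * y := by gcongr
    _ ≤ f y / y * y := mul_le_mul_of_nonneg_right (hf (mem_Ioi.2 hy) (mem_Ioi.2 hx) hyx) hy.le
    _ = f y := div_mul_cancel₀ _ hy.ne'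

theorem exists_nat_rpow_two_le_lt {x : ℝ} {K : ℕ} (hx : 0 < x) (hxK : x < 2 ^ (-(K : ℝ))) :
    ∃ l : ℕ, K < l ∧ (2 : ℝ) ^ (-(l : ℝ)) ≤ x ∧ x < 2 ^ (1 - (l : ℝ)) := by
  obtain ⟨a, rfl⟩ : ∃ a : ℝ, x = 2 ^ (-a) :=
    ⟨-Real.logb 2 x, by rw [neg_neg, Real.rpow_logb two_pos (by norm_num) hx]⟩
  have hKa : (K : ℝ) < a := neg_lt_neg_iff.1 ((Real.rpow_lt_rpow_left_iff one_lt_two).1 hxK)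
  have hceil : (⌈a⌉₊ : ℝ) < a + 1 := Nat.ceil_lt_add_one (K.cast_nonneg.trans hKa.le)
  refine ⟨⌈a⌉₊, Nat.cast_lt.1 (hKa.trans_le (Nat.le_ceil a)), ?_, ?_⟩
  · exact Real.rpow_le_rpow_of_exponent_le one_le_two (neg_le_neg (Nat.le_ceil a))
  · exact Real.rpow_lt_rpow_of_exponent_lt one_lt_two (by linarith)

theorem RatioDecreasing.frequently_rpow_lt {f : ℝ → ℝ} (hf : RatioDecreasing f) {s t : ℝ}
    (hs1 : s < 1)
    (hbig : ∀ ρ : ℝ, s < ρ → ρ ≤ 1 → ∀ ε : ℝ, 0 < ε → ∃ x : ℝ, 0 < x ∧ x < ε ∧ f x > x ^ ρ)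
    (ht : s < t) :
    ∃ᶠ l : ℕ in atTop, (2 : ℝ) ^ (-((l : ℝ) * t)) < f (2 ^ (-(l : ℝ))) := by
  rw [frequently_atTop]
  intro M
  obtain ⟨ρ, hsρ, hρ⟩ := exists_between (lt_min ht hs1)
  have hρt : ρ < t := hρ.trans_le (min_le_left _ _)
  have hρ1 : ρ < 1 := hρ.trans_le (min_le_right _ _)
  obtain ⟨K, hK⟩ := exists_nat_ge (max (M : ℝ) ((1 - ρ) / (t - ρ)))
  obtain ⟨x, hx0, hxK, hfx⟩ := hbig ρ hsρ hρ1.le _ (Real.rpow_pos_of_pos two_pos (-(K : ℝ)))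
  obtain ⟨l, hKl, hlx, hxl⟩ := exists_nat_rpow_two_le_lt hx0 hxK
  have hKl' : (K : ℝ) < l := Nat.cast_lt.2 hKl
  -- the factor `2 ^ (ρ - 1)` lost below is paid for by `l (t - ρ) ≥ 1 - ρ`
  have hpay : 1 - ρ ≤ l * (t - ρ) :=
    ((div_le_iff₀ (sub_pos.2 hρt)).1 ((le_max_right _ _).trans hK)).trans
      (mul_le_mul_of_nonneg_right hKl'.le (sub_pos.2 hρt).le)
  refine ⟨l, Nat.cast_le.1 ((le_max_left _ _).trans (hK.trans hKl'.le)), ?_⟩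
  calc (2 : ℝ) ^ (-((l : ℝ) * t)) ≤ 2 ^ ((1 - l) * (ρ - 1) + -l) :=
        Real.rpow_le_rpow_of_exponent_le one_le_two (by linarith)
    _ = (2 ^ (1 - (l : ℝ))) ^ (ρ - 1) * 2 ^ (-(l : ℝ)) := by
        rw [Real.rpow_add two_pos, Real.rpow_mul zero_le_two]
    _ ≤ x ^ (ρ - 1) * 2 ^ (-(l : ℝ)) := mul_le_mul_of_nonneg_right
        (Real.rpow_le_rpow_of_nonpos hx0 hxl.le (sub_nonpos.2 hρ1.le)) (by positivity)
    _ < f (2 ^ (-(l : ℝ))) := hf.rpow_sub_one_mul_lt (by positivity) hlx hfx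

theorem exists_seq_of_frequently {P : ℕ → ℕ → Prop} (hP : ∀ n, ∃ᶠ m in atTop, P n m)
    (b : ℕ → ℕ → ℕ) : ∃ l : ℕ → ℕ, l 0 = 0 ∧ ∀ n, b n (l n) < l (n + 1) ∧ P n (l (n + 1)) := by
  have : ∀ n k, ∃ m, b n k < m ∧ P n m := fun n k =>
    ((hP n).and_eventually (eventually_gt_atTop (b n k))).exists.imp fun _ h => ⟨h.2, h.1⟩
  choose g hg using this
  exact ⟨fun n => Nat.rec 0 (fun k lk => g k lk) n, rfl, fun n => hg n _⟩

theorem le_ceil_mul_div (r : ℝ) {L : ℝ} (hL : 0 < L) : r ≤ ⌈r * L⌉ / L :=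
  (le_div_iff₀ hL).2 (Int.le_ceil _)

theorem ceil_mul_div_lt (r : ℝ) {L : ℝ} (hL : 0 < L) : ⌈r * L⌉ / L < r + L⁻¹ := by
  rw [div_lt_iff₀ hL, add_mul, inv_mul_cancel₀ hL.ne']
  exact Int.ceil_lt_add_one _

theorem antitone_ceil_mul_div {r L : ℕ → ℝ} (hL : ∀ n, 0 < L n)
    (hmesh : ∀ n, (L (n + 1))⁻¹ ≤ r n - r (n + 1)) :
    Antitone fun n => ⌈r n * L n⌉ / L n :=
  antitone_nat_of_succ_le fun n => by
    linarith [ceil_mul_div_lt (r (n + 1)) (hL (n + 1)), le_ceil_mul_div (r n) (hL n), hmesh n]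

theorem tendsto_ceil_mul_div {r L : ℕ → ℝ} {s : ℝ} (hr : Tendsto r atTop (nhds s))
    (hL : Tendsto L atTop atTop) : Tendsto (fun n => ⌈r n * L n⌉ / L n) atTop (nhds s) := by
  have hupper : Tendsto (fun n => r n + (L n)⁻¹) atTop (nhds s) := by
    simpa using hr.add hL.inv_tendsto_atTop
  have hpos : ∀ᶠ n in atTop, 0 < L n := hL.eventually_gt_atTop 0
  exact tendsto_of_tendsto_of_tendsto_of_le_of_le' hr hupper
    (hpos.mono fun n hn => le_ceil_mul_div _ hn) (hpos.mono fun n hn => (ceil_mul_div_lt _ hn).le)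

theorem stmt19_general (s : ℝ) (hs1 : s < 1)
    (f : ℝ → ℝ) (hdec : RatioDecreasing f)
    (hbig : ∀ ρ : ℝ, s < ρ → ρ ≤ 1 → ∀ ε : ℝ, 0 < ε → ∃ x : ℝ, 0 < x ∧ x < ε ∧ f x > x ^ ρ)
    (r : ℕ → ℝ) (hra : StrictAnti r) (hrs : ∀ n, s < r n)
    (hrt : Filter.Tendsto r Filter.atTop (nhds s)) :
    ∃ l : ℕ → ℕ, ∃ rs : ℕ → ℝ,
      l 0 = 0 ∧ (∀ n : ℕ, 2 ^ n + l n < l (n + 1)) ∧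
      (∀ n : ℕ, rs n = (⌈r n * (l (n + 1) : ℝ)⌉ : ℝ) / (l (n + 1) : ℝ)) ∧
      Antitone rs ∧ Filter.Tendsto rs Filter.atTop (nhds s) ∧
      ∀ n : ℕ, f ((2 : ℝ) ^ (-(l (n + 1) : ℝ)))
        > (2 : ℝ) ^ (-((l (n + 1) : ℝ) * rs n)) := by
  have hgap : ∀ n, 0 < r n - r (n + 1) := fun n => sub_pos.2 (hra n.lt_succ_self)
  obtain ⟨l, hl0, hl⟩ := exists_seq_of_frequently
    (fun n => (hdec.frequently_rpow_lt hs1 hbig (hrs n)).and_eventually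
      (eventually_ge_atTop ⌈(r n - r (n + 1))⁻¹⌉₊)) fun n k => 2 ^ n + k
  set L : ℕ → ℝ := fun n => (l (n + 1) : ℝ)
  have hnL : ∀ n : ℕ, (n : ℝ) < L n := fun n => by
    have := Nat.lt_two_pow_self (n := n)
    exact Nat.cast_lt.2 (by linarith [(hl n).1])
  have hLpos : ∀ n, 0 < L n := fun n => n.cast_nonneg.trans_lt (hnL n)
  have hmesh : ∀ n, (L (n + 1))⁻¹ ≤ r n - r (n + 1) := fun n => by
    refine inv_le_of_inv_le₀ (hgap n) ((Nat.ceil_le.1 (hl n).2.2).trans ?_)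
    exact Nat.cast_le.2 ((hl (n + 1)).1.le.trans' (Nat.le_add_left _ _))
  refine ⟨l, fun n => ⌈r n * L n⌉ / L n, hl0, fun n => (hl n).1, fun n => rfl,
    antitone_ceil_mul_div hLpos hmesh,
    tendsto_ceil_mul_div hrt (tendsto_atTop_mono (fun n => (hnL n).le) tendsto_natCast_atTop_atTop),
    fun n => (hl n).2.1.trans_le' ?_⟩
  exact Real.rpow_le_rpow_of_exponent_le one_le_two
    (neg_le_neg (mul_le_mul_of_nonneg_left (le_ceil_mul_div _ (hLpos n)) (hLpos n).le))

/-- construction of the sequences `(l_n)` and `(r_n^*)`. -/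
theorem stmt19 (s : ℝ) (hs0 : 0 ≤ s) (hs1 : s < 1)
    (f : ℝ → ℝ) (hf : IsGauge f) (hdec : RatioDecreasing f)
    (hbig : ∀ ρ : ℝ, s < ρ → ρ ≤ 1 → ∀ ε : ℝ, 0 < ε → ∃ x : ℝ, 0 < x ∧ x < ε ∧ f x > x ^ ρ)
    (r : ℕ → ℝ) (hra : StrictAnti r) (hrs : ∀ n, s < r n)
    (hrt : Filter.Tendsto r Filter.atTop (nhds s)) :
    ∃ l : ℕ → ℕ, ∃ rs : ℕ → ℝ,
      l 0 = 0 ∧ (∀ n : ℕ, 2 ^ n + l n < l (n + 1)) ∧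
      (∀ n : ℕ, rs n = (⌈r n * (l (n + 1) : ℝ)⌉ : ℝ) / (l (n + 1) : ℝ)) ∧
      Antitone rs ∧ Filter.Tendsto rs Filter.atTop (nhds s) ∧
      ∀ n : ℕ, f ((2 : ℝ) ^ (-(l (n + 1) : ℝ)))
        > (2 : ℝ) ^ (-((l (n + 1) : ℝ) * rs n)) :=
  stmt19_general s hs1 f hdec hbig r hra hrs hrt
end
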